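/- arXiv:1404.7771 — 3 statements merged into one kernel-verified Lean document; each statement's English description precedes it below -/
import Mathlib

section
/- Let M be a vertically 3-connected matroid with no loops (no elements of rank 0) and at least 2 elements. Then every pair of elements of M lies in a common circuit. -/
/-- The rank of a set `X` in a (finite) matroid: the maximum size of an independent
subset of `X`. -/
noncomputable def mrk {α : Type*} (M : Matroid α) (X : Set α) : ℕ :=
  sSup {n | ∃ I, M.Indep I ∧ I ⊆ X ∧ I.ncard = n}

/-- A circuit of a matroid: a minimal dependent set. -/
def MIsCircuit {α : Type*} (M : Matroid α) (C : Set α) : Prop :=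
  M.Dep C ∧ ∀ D, D ⊂ C → ¬ M.Dep D

/-- `M` is vertically `t`-connected: for every partition `(A, M.E \ A)` of the ground set
with `r(A) + r(M.E \ A) < r(M) + t − 1`, one of the parts is spanning. -/
def MVertConn {α : Type*} (M : Matroid α) (t : ℤ) : Prop :=
  ∀ A ⊆ M.E, (mrk M A : ℤ) + mrk M (M.E \ A) < mrk M M.E + t - 1 →
    mrk M A = mrk M M.E ∨ mrk M (M.E \ A) = mrk M M.E


/-!
If `e` and `f` lie in no common circuit, let `A` be the set of elements sharing a circuit with
`e`. Since "lying in a common circuit" is transitive along intersecting circuits (by two strong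
circuit eliminations and induction on `|C₁ ∪ C₂|`), every circuit lies in `A` or avoids it, so
bases of `A` and of `E \ A` combine to a basis of `M` and `r(A) + r(E \ A) = r(M)`. Vertical
3-connectivity then makes one side spanning, hence the other of rank `0`; but `A` contains `e`
and `E \ A` contains `f`, neither of which is a loop.
-/

namespace Matroid

open Set

variable {α : Type*} {M : Matroid α} {C₁ C₂ C₃ : Set α} {e f g : α}

lemma IsCircuit.not_subset_of_mem_sdiff (h₃ : M.IsCircuit C₃) (h₁ : M.IsCircuit C₁)
    (hg : g ∈ C₁ \ C₃) : ¬ C₃ ⊆ C₁ :=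
  fun hsub => hg.2 (h₃.eq_of_subset_isCircuit h₁ hsub ▸ hg.1)

lemma IsCircuit.exists_isCircuit_mem_mem_or_union_ssubset (h₁ : M.IsCircuit C₁)
    (h₂ : M.IsCircuit C₂) (heC₁ : e ∈ C₁) (heC₂ : e ∉ C₂) (hfC₂ : f ∈ C₂) (hg₁ : g ∈ C₁)
    (hg₂ : g ∈ C₂) :
    (∃ C, M.IsCircuit C ∧ e ∈ C ∧ f ∈ C) ∨
      ∃ C₄, M.IsCircuit C₄ ∧ f ∈ C₄ ∧ (C₁ ∩ C₄).Nonempty ∧ C₁ ∪ C₄ ⊂ C₁ ∪ C₂ := by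
  obtain ⟨C₃, hC₃sub, hC₃, heC₃⟩ := h₁.strong_elimination h₂ hg₁ hg₂ heC₁ heC₂
  by_cases hfC₃ : f ∈ C₃
  · exact .inl ⟨C₃, hC₃, heC₃, hfC₃⟩
  obtain ⟨x, hxC₃, hxC₁⟩ :=
    not_subset.1 (hC₃.not_subset_of_mem_sdiff h₁ ⟨hg₁, fun h => (hC₃sub h).2 rfl⟩)
  have hxC₂ : x ∈ C₂ := (hC₃sub hxC₃).1.resolve_left hxC₁
  obtain ⟨C₄, hC₄sub, hC₄, hfC₄⟩ := h₂.strong_elimination hC₃ hxC₂ hxC₃ hfC₂ hfC₃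
  by_cases heC₄ : e ∈ C₄
  · exact .inl ⟨C₄, hC₄, heC₄, hfC₄⟩
  obtain ⟨y, hyC₄, hyC₂⟩ :=
    not_subset.1 (hC₄.not_subset_of_mem_sdiff h₂ ⟨hxC₂, fun h => (hC₄sub h).2 rfl⟩)
  have hyC₃ : y ∈ C₃ := (hC₄sub hyC₄).1.resolve_left hyC₂
  have hyC₁ : y ∈ C₁ := (hC₃sub hyC₃).1.resolve_right hyC₂
  have hC₄C₁₂ : C₄ ⊆ C₁ ∪ C₂ :=
    hC₄sub.trans <| sdiff_subset.trans <|
      union_subset subset_union_right (hC₃sub.trans sdiff_subset)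
  refine .inr ⟨C₄, hC₄, hfC₄, ⟨y, hyC₁, hyC₄⟩, ?_⟩
  rw [ssubset_iff_of_subset (union_subset subset_union_left hC₄C₁₂)]
  exact ⟨x, .inr hxC₂, by rintro (h | h); exacts [hxC₁ h, (hC₄sub h).2 rfl]⟩

lemma IsCircuit.exists_isCircuit_mem_mem_of_inter_nonempty [M.Finitary] (h₁ : M.IsCircuit C₁)
    (h₂ : M.IsCircuit C₂) (he : e ∈ C₁) (hf : f ∈ C₂) (hne : (C₁ ∩ C₂).Nonempty) :
    ∃ C, M.IsCircuit C ∧ e ∈ C ∧ f ∈ C := by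
  induction hn : (C₁ ∪ C₂).ncard using Nat.strong_induction_on generalizing C₂ with
  | _ n ih =>
  by_cases hfC₁ : f ∈ C₁
  · exact ⟨C₁, h₁, he, hfC₁⟩
  by_cases heC₂ : e ∈ C₂
  · exact ⟨C₂, h₂, heC₂, hf⟩
  obtain ⟨g, hg₁, hg₂⟩ := hne
  obtain h | ⟨C₄, hC₄, hfC₄, hne', hss⟩ :=
    h₁.exists_isCircuit_mem_mem_or_union_ssubset h₂ he heC₂ hf hg₁ hg₂
  · exact h
  · exact ih _ (hn ▸ ncard_lt_ncard hss (h₁.finite.union h₂.finite)) hC₄ hfC₄ hne' rfl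

/-- The connected component of `e` (Oxley, §4.1) when `e ∈ M.E`. -/
def circuitComponent (M : Matroid α) (e : α) : Set α :=
  insert e {g | ∃ C, M.IsCircuit C ∧ e ∈ C ∧ g ∈ C}

lemma circuitComponent_subset_ground (he : e ∈ M.E) : M.circuitComponent e ⊆ M.E := by
  rintro g (rfl | ⟨C, hC, -, hgC⟩)
  exacts [he, hC.subset_ground hgC]

lemma IsCircuit.subset_circuitComponent_or_disjoint [M.Finitary] {C : Set α}
    (hC : M.IsCircuit C) (e : α) :
    C ⊆ M.circuitComponent e ∨ Disjoint C (M.circuitComponent e) := by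
  refine (disjoint_or_nonempty_inter C (M.circuitComponent e)).symm.imp (fun hne x hx => ?_) id
  obtain ⟨g, hgC, rfl | ⟨C₁, hC₁, heC₁, hgC₁⟩⟩ := hne
  · exact .inr ⟨C, hC, hgC, hx⟩
  · exact .inr (hC₁.exists_isCircuit_mem_mem_of_inter_nonempty hC heC₁ hx ⟨g, hgC₁, hgC⟩)

lemma eRk_add_eRk_sdiff_of_forall_isCircuit {A : Set α} (hA : A ⊆ M.E)
    (hsep : ∀ C, M.IsCircuit C → C ⊆ A ∨ Disjoint C A) :
    M.eRk A + M.eRk (M.E \ A) = M.eRank := by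
  refine le_antisymm ?_ ?_
  · obtain ⟨I, hI⟩ := M.exists_isBasis A
    obtain ⟨J, hJ⟩ := M.exists_isBasis (M.E \ A)
    have hIJ : Disjoint I J := disjoint_sdiff_right.mono hI.subset hJ.subset
    have hindep : M.Indep (I ∪ J) := by
      rw [indep_iff_forall_subset_not_isCircuit (union_subset hI.indep.subset_ground
        hJ.indep.subset_ground)]
      intro C hCIJ hC
      rcases hsep C hC with hCA | hCA
      · refine hC.not_indep (hI.indep.subset fun x hx => (hCIJ hx).resolve_right fun hxJ => ?_)
        exact (hJ.subset hxJ).2 (hCA hx)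
      · refine hC.not_indep (hJ.indep.subset fun x hx => (hCIJ hx).resolve_left fun hxI => ?_)
        exact disjoint_left.1 hCA hx (hI.subset hxI)
    rw [← hI.encard_eq_eRk, ← hJ.encard_eq_eRk, ← encard_union_eq hIJ]
    exact hindep.encard_le_eRank
  · rw [eRank_def]
    calc M.eRk M.E = M.eRk (A ∪ M.E \ A) := by rw [union_sdiff_cancel hA]
      _ ≤ M.eRk A + M.eRk (M.E \ A) := M.eRk_union_le_eRk_add_eRk _ _

end Matroid

open Matroid

lemma mIsCircuit_iff_isCircuit {α : Type*} {M : Matroid α} {C : Set α} :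
    MIsCircuit M C ↔ M.IsCircuit C := by
  rw [isCircuit_iff_forall_ssubset]
  exact and_congr_right fun hC => forall₂_congr fun D hD =>
    not_dep_iff (hD.subset.trans hC.subset_ground)

lemma cast_mrk {α : Type*} (M : Matroid α) [M.RankFinite] (X : Set α) :
    (mrk M X : ℕ∞) = M.eRk X := by
  have htop : M.eRk X ≠ ⊤ := (M.isRkFinite_set X).eRk_lt_top.ne
  suffices IsGreatest {n | ∃ I, M.Indep I ∧ I ⊆ X ∧ I.ncard = n} (M.eRk X).toNat by
    rw [mrk, this.csSup_eq, ENat.natCast_toNat htop]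
  obtain ⟨I, hI⟩ := M.exists_isBasis' X
  refine ⟨⟨I, hI.indep, hI.subset, by rw [Set.ncard_def, hI.encard_eq_eRk]⟩, ?_⟩
  rintro _ ⟨J, hJ, hJX, rfl⟩
  exact ENat.toNat_le_toNat (hJ.encard_le_eRk_of_subset hJX) htop

lemma mrk_mono {α : Type*} (M : Matroid α) [M.RankFinite] {X Y : Set α} (h : X ⊆ Y) :
    mrk M X ≤ mrk M Y := by
  have := M.eRk_mono h
  rwa [← cast_mrk, ← cast_mrk, Nat.cast_le] at this

theorem pair_in_circuit_general {α : Type*} (M : Matroid α) [M.Finite]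
    (hconn : MVertConn M 3) (hloopless : ∀ e ∈ M.E, 0 < mrk M {e}) :
    ∀ e ∈ M.E, ∀ f ∈ M.E, e ≠ f → ∃ C, MIsCircuit M C ∧ e ∈ C ∧ f ∈ C := by
  intro e he f hf hef
  by_contra hno
  set A := M.circuitComponent e
  have hAE : A ⊆ M.E := circuitComponent_subset_ground he
  have hsum : mrk M A + mrk M (M.E \ A) = mrk M M.E := by
    have := eRk_add_eRk_sdiff_of_forall_isCircuit hAE
      fun C hC => hC.subset_circuitComponent_or_disjoint e
    rw [eRank_def, ← cast_mrk, ← cast_mrk, ← cast_mrk] at this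
    exact_mod_cast this
  have heA : e ∈ A := Set.mem_insert e _
  have hfB : f ∈ M.E \ A := by
    refine ⟨hf, ?_⟩
    rintro (rfl | ⟨C, hC, heC, hfC⟩)
    exacts [hef rfl, hno ⟨C, mIsCircuit_iff_isCircuit.2 hC, heC, hfC⟩]
  have hrkA : mrk M {e} ≤ mrk M A := mrk_mono M (Set.singleton_subset_iff.2 heA)
  have hrkB : mrk M {f} ≤ mrk M (M.E \ A) := mrk_mono M (Set.singleton_subset_iff.2 hfB)
  have he₀ := hloopless e he
  have hf₀ := hloopless f hf
  rcases hconn A hAE (by omega) with h | h <;> omega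

/-- In a vertically 3-connected finite matroid with at least two elements and no loops,
every pair of distinct elements lies in a common circuit. -/
theorem pair_in_circuit {α : Type*} (M : Matroid α) [M.Finite]
    (hconn : MVertConn M 3) (hloopless : ∀ e ∈ M.E, 0 < mrk M {e})
    (hcard : 2 ≤ M.E.ncard) :
    ∀ e ∈ M.E, ∀ f ∈ M.E, e ≠ f → ∃ C, MIsCircuit M C ∧ e ∈ C ∧ f ∈ C :=
  pair_in_circuit_general M hconn hloopless
end

section
/- Let A be a matrix over a field F in which every column has at most two nonzero entries (a frame matrix), with a graph representation (G,Σ): each column e with two nonzero entries in rows x,y is an arc from x to y labelled −A[e,x]·A[e,y]^{−1}. If C is a balanced cycle of (G,Σ) (the product of labels, inverted for arcs traversed backwards, equals 1), then the set of columns of A indexed by the edges of C is linearly dependent. -/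
/-!
Write `a i` and `b i` for the entries of the `i`-th column at `v i` and `v (i + 1)`. Balance says
that the ratios `-b i / a i` multiply to `1` around the cycle, so they are the successive quotients
`d (i + 1) / d i` of a potential `d` on the cycle. With coefficients `d i / a i` the two columns
meeting at each vertex `v (i + 1)` cancel there, which gives a nontrivial vanishing combination.
-/

theorem Fin.partialProd_last {M : Type*} [CommMonoid M] {n : ℕ} (σ : Fin n → M) :
    Fin.partialProd σ (Fin.last n) = ∏ i, σ i := by
  simp [Fin.partialProd, List.take_of_length_le, List.prod_ofFn]

theorem Fin.exists_potential_of_prod_eq_one {M : Type*} [CommMonoid M] {n : ℕ}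
    (σ : Fin (n + 1) → M) (hσ : ∏ i, σ i = 1) :
    ∃ d : Fin (n + 1) → M, d 0 = 1 ∧ ∀ i, d (i + 1) = d i * σ i := by
  refine ⟨fun i => Fin.partialProd σ i.castSucc, Fin.partialProd_zero σ, fun i => ?_⟩
  dsimp only
  induction i using Fin.lastCases with
  | last =>
    rw [Fin.last_add_one, ← Fin.partialProd_succ, Fin.succ_last, Fin.partialProd_last, hσ,
      Fin.castSucc_zero, Fin.partialProd_zero]
  | cast j => rw [Fin.coeSucc_eq_succ, ← Fin.succ_castSucc, Fin.partialProd_succ]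

section CycleSupported

variable {F V : Type*} [Field F] {k : ℕ} {v : Fin (k + 2) → V} {x : Fin (k + 2) → V → F}

theorem sum_smul_eq_zero_of_cycle_support (hv : Function.Injective v)
    (hsupp : ∀ i w, x i w ≠ 0 → w = v i ∨ w = v (i + 1)) (c : Fin (k + 2) → F)
    (hc : ∀ i, c i * x i (v (i + 1)) + c (i + 1) * x (i + 1) (v (i + 1)) = 0) :
    ∑ i, c i • x i = 0 := by
  funext w
  simp only [Finset.sum_apply, Pi.smul_apply, smul_eq_mul, Pi.zero_apply]
  by_cases hw : ∃ j, w = v (j + 1)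
  · obtain ⟨j, rfl⟩ := hw
    rw [Fintype.sum_eq_add j (j + 1) (by simp) fun i ⟨hij, hij'⟩ => ?_, hc j]
    by_contra hne
    rcases hsupp i _ (right_ne_zero_of_mul hne) with h | h
    · exact hij' (hv h).symm
    · exact hij (add_right_cancel (hv h)).symm
  · refine Finset.sum_eq_zero fun i _ => mul_eq_zero_of_right _ ?_
    by_contra hne
    rcases hsupp i w hne with h | h
    · exact hw ⟨i - 1, by rwa [sub_add_cancel]⟩
    · exact hw ⟨i, h⟩

theorem not_linearIndependent_of_cycle_support (hv : Function.Injective v)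
    (hsupp : ∀ i w, x i w ≠ 0 → w = v i ∨ w = v (i + 1)) (hnz : ∀ i, x i (v i) ≠ 0)
    (hbal : ∏ i, (-(x i (v i)) * (x i (v (i + 1)))⁻¹) = 1) :
    ¬ LinearIndependent F x := by
  obtain ⟨d, hd0, hd⟩ := Fin.exists_potential_of_prod_eq_one
    (fun i => -(x i (v (i + 1))) * (x i (v i))⁻¹) (by
      rw [← inv_one, ← hbal, ← Finset.prod_inv_distrib]; simp [mul_comm])
  rw [Fintype.not_linearIndependent_iff]
  refine ⟨fun i => d i * (x i (v i))⁻¹,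
    sum_smul_eq_zero_of_cycle_support hv hsupp _ fun i => ?_, 0, by simp [hd0, hnz 0]⟩
  rw [mul_assoc _ _ (x (i + 1) _), inv_mul_cancel₀ (hnz (i + 1)), hd]
  ring

end CycleSupported

theorem balanced_cycle_dependent_general {F V E : Type*} [Field F]
    (A : V → E → F)
    (k : ℕ) (v : Fin (k + 2) → V) (e : Fin (k + 2) → E)
    (hv : Function.Injective v)
    (hsupp : ∀ i w, A w (e i) ≠ 0 → w = v i ∨ w = v (i + 1))
    (hnz₁ : ∀ i, A (v i) (e i) ≠ 0)
    (hbal : ∏ i : Fin (k + 2), (-(A (v i) (e i)) * (A (v (i + 1)) (e i))⁻¹) = 1) :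
    ¬ LinearIndependent F (fun i : Fin (k + 2) => fun w => A w (e i)) :=
  not_linearIndependent_of_cycle_support hv hsupp hnz₁ hbal

/-- Let `A` be a frame matrix over a field `F` (rows `V`, columns `E`, every column with at
most two nonzero entries), with graph representation `(G, Σ)`: a column `e` with two nonzero
entries in rows `x, y` is an arc from `x` to `y` labelled `−A[e,x]·A[e,y]⁻¹`. If `C` is a
balanced cycle of `(G, Σ)` — given by distinct vertices `v 0, …, v (k+1)` and distinct
arcs `e i` joining `v i` and `v (i+1)` (indices cyclic), whose sign
`∏ i, (−A[v i, e i]·A[v (i+1), e i]⁻¹)` equals `1` — then the columns of `A` indexed by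
the edges of `C` are linearly dependent. -/
theorem balanced_cycle_dependent {F V E : Type*} [Field F] [Fintype V]
    (A : V → E → F)
    (hframe : ∀ e : E, ∃ x y : V, ∀ w : V, A w e ≠ 0 → w = x ∨ w = y)
    (k : ℕ) (v : Fin (k + 2) → V) (e : Fin (k + 2) → E)
    (hv : Function.Injective v) (he : Function.Injective e)
    (hsupp : ∀ i w, A w (e i) ≠ 0 → w = v i ∨ w = v (i + 1))
    (hnz₁ : ∀ i, A (v i) (e i) ≠ 0) (hnz₂ : ∀ i, A (v (i + 1)) (e i) ≠ 0)
    (hbal : ∏ i : Fin (k + 2), (-(A (v i) (e i)) * (A (v (i + 1)) (e i))⁻¹) = 1) :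
    ¬ LinearIndependent F (fun i : Fin (k + 2) => fun w => A w (e i)) :=
  balanced_cycle_dependent_general A k v e hv hsupp hnz₁ hbal
end

section
/- Let A be a frame matrix over a field F (every column has at most two nonzero entries) with graph representation (G,Σ). If H is a connected subgraph of G of minimum degree at least 2 that is not a cycle, then the columns of A indexed by the edges of H are linearly dependent. -/
/-!
Restricting independent columns to the rows of the vertices of `H` gives `|E(H)| ≤ |V(H)|`.
By the handshake identity `∑ deg = 2 |E(H)|` and `deg ≥ 2`, every vertex of `H` then has
degree exactly `2`, and a connected graph with all degrees `2` is a cycle. For the last step,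
let `r` reverse a dart (half-edge) of `H` and `s` switch to the other dart at the same vertex:
the orbit of a dart under `s * r` walks around `H`. Since `r` conjugates `s * r` to its
inverse and `r`, `s` are fixed-point-free involutions, no orbit contains a dart together with
its reverse, so the walk repeats no edge and no vertex; connectivity makes it cover `H`.
-/

/-- A finite edge set `H` of a multigraph/digraph (with endpoint map `ends : E → V × V`)
is a cycle: a closed walk with distinct vertices `f i` and distinct edges `g i` whose edge
set is exactly `H`, each edge joining consecutive vertices (in either direction). -/
def IsCycleEdgeSet {V E : Type*} [DecidableEq E] (ends : E → V × V) (H : Finset E) : Prop :=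
  ∃ (k : ℕ) (f : Fin (k + 1) → V) (g : Fin (k + 1) → E),
    Function.Injective f ∧ Function.Injective g ∧
    H = Finset.image g Finset.univ ∧
    ∀ i : Fin (k + 1), ends (g i) = (f i, f (i + 1)) ∨ ends (g i) = (f (i + 1), f i)

open Finset Equiv
namespace Equiv.Perm

variable {α : Type*}

theorem apply_zpow_apply_of_mul_eq_inv_mul {r σ : Perm α} (h : r * σ = σ⁻¹ * r)
    (m : ℤ) (x : α) : r ((σ ^ m) x) = (σ ^ (-m)) (r x) := by
  have hconj : r * σ * r⁻¹ = σ⁻¹ := by rw [h, mul_inv_cancel_right]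
  have := congrArg (· ^ m) hconj
  simp only [conj_zpow, inv_zpow'] at this
  rw [← this]
  simp [Perm.mul_apply]

theorem not_sameCycle_mul_apply {r s : Perm α} (hr : Function.Involutive r)
    (hs : Function.Involutive s) (hr₀ : ∀ x, r x ≠ x) (hs₀ : ∀ x, s x ≠ x) (x : α) :
    ¬ (s * r).SameCycle x (r x) := by
  set σ := s * r
  have hrev : r * σ = σ⁻¹ * r := by
    ext y
    simp only [Perm.mul_apply]
    rw [eq_comm, Perm.inv_eq_iff_eq]
    simp [σ, hr _, hs _]
  rintro ⟨n, hn⟩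
  -- `σ^(2m) x = r x` makes `σ^m x` a fixed point of `r`;
  -- `σ^(2m+1) x = r x` makes `r (σ^m x)` a fixed point of `s`.
  obtain ⟨m, rfl | rfl⟩ := Int.even_or_odd' n
  · apply hr₀ ((σ ^ m) x)
    rw [apply_zpow_apply_of_mul_eq_inv_mul hrev, ← hn, ← Perm.mul_apply, ← zpow_add]
    congr 2; ring
  · apply hs₀ (r ((σ ^ m) x))
    have : σ ((σ ^ m) x) = r ((σ ^ m) x) := by
      rw [apply_zpow_apply_of_mul_eq_inv_mul hrev, ← hn, ← Perm.mul_apply, ← Perm.mul_apply,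
        ← zpow_add, ← zpow_one_add]
      congr 2; ring
    simpa [σ] using this

theorem exists_fin_enum_sameCycle [Finite α] (σ : Perm α) (x : α) :
    ∃ (k : ℕ) (q : Fin (k + 1) → α), Function.Injective q ∧ (∀ i, q (i + 1) = σ (q i)) ∧
      ∀ y, y ∈ Set.range q ↔ σ.SameCycle x y := by
  obtain ⟨k, hk⟩ := Nat.exists_eq_add_one_of_ne_zero
    (Function.minimalPeriod_pos_of_mem_periodicPts (σ.injective.mem_periodicPts x)).ne'
  have hlt (i : Fin (k + 1)) : (i : ℕ) ∈ Set.Iio (Function.minimalPeriod σ x) := by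
    rw [Set.mem_Iio, hk]; exact i.isLt
  refine ⟨k, fun i => σ^[i] x, fun i j hij => ?_, fun i => ?_, ?_⟩
  · exact Fin.ext (Function.iterate_injOn_Iio_minimalPeriod (hlt i) (hlt j) hij)
  · show σ^[((i + 1 : Fin (k + 1)) : ℕ)] x = σ (σ^[i] x)
    rw [← Function.iterate_succ_apply' σ, Fin.val_add, Fin.val_one', Nat.add_mod_mod,
      ← Function.iterate_mod_minimalPeriod_eq (n := (i : ℕ).succ), hk]
  · intro y
    constructor
    · rintro ⟨i, rfl⟩
      exact ⟨i, by simp [← iterate_eq_pow]⟩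
    · intro h
      obtain ⟨n, rfl⟩ := h.exists_nat_pow_eq
      refine ⟨⟨n % (k + 1), Nat.mod_lt _ k.succ_pos⟩, ?_⟩
      simp only [← hk, Function.iterate_mod_minimalPeriod_eq, iterate_eq_pow]

end Equiv.Perm

theorem exists_involution_of_card_fiber_eq_two {D V : Type*} [Fintype D] [DecidableEq V]
    (φ : D → V) (h : ∀ d, #{d' | φ d' = φ d} = 2) :
    ∃ s : Perm D, Function.Involutive s ∧ (∀ d, s d ≠ d) ∧
      ∀ d d', φ d' = φ d ↔ d' = d ∨ d' = s d := by
  classical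
  have hone (d : D) : #(({d' | φ d' = φ d} : Finset D).erase d) = 1 := by
    rw [card_erase_of_mem (by simp), h]
  choose t ht using fun d => card_eq_one.mp (hone d)
  have hfiber (d d' : D) : φ d' = φ d ↔ d' = d ∨ d' = t d := by
    have := congrArg (d' ∈ ·) (ht d)
    simp only [mem_erase, mem_filter, mem_univ, true_and, mem_singleton, eq_iff_iff] at this
    tauto
  have hne (d : D) : t d ≠ d := by
    have hmem : t d ∈ ({d' | φ d' = φ d} : Finset D).erase d := by
      rw [ht d]; exact mem_singleton_self _
    exact (mem_erase.mp hmem).1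
  have hinv : Function.Involutive t := fun d =>
    have hφ : φ d = φ (t d) := ((hfiber d (t d)).mpr (Or.inr rfl)).symm
    (((hfiber (t d) d).mp hφ).resolve_left (hne d).symm).symm
  exact ⟨hinv.toPerm t, hinv, hne, hfiber⟩

section Darts

variable {V E : Type*} (ends : E → V × V) (H : Finset E)

/-- The darts of `H` are its half-edges: `(e, true)` sits at `(ends e).1` and `(e, false)` at
`(ends e).2`, so a loop has two darts at the same vertex. -/
def dartVert (d : H × Bool) : V := cond d.2 (ends d.1).1 (ends d.1).2

def dartRev : Perm (H × Bool) := (Equiv.refl H).prodCongr boolNot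

variable {ends H}

@[simp] theorem dartRev_apply (d : H × Bool) : dartRev H d = (d.1, !d.2) := rfl

theorem dartRev_involutive : Function.Involutive (dartRev H) := fun d => by simp

theorem dartRev_apply_ne (d : H × Bool) : dartRev H d ≠ d := fun h => by
  simpa using congrArg Prod.snd h

theorem ends_eq_dartVert (d : H × Bool) :
    ends d.1 = (dartVert ends H d, dartVert ends H (dartRev H d)) ∨
      ends d.1 = (dartVert ends H (dartRev H d), dartVert ends H d) := by
  obtain ⟨e, _ | _⟩ := d <;> simp [dartVert]

theorem exists_mem_ends_eq_dartVert (d : H × Bool) :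
    ∃ e ∈ H, (ends e).1 = dartVert ends H d ∨ (ends e).2 = dartVert ends H d :=
  ⟨d.1, d.1.2, by obtain ⟨e, _ | _⟩ := d <;> simp [dartVert]⟩

theorem exists_dart_of_adj {a b : V} (h : ∃ e ∈ H, ends e = (a, b) ∨ ends e = (b, a)) :
    ∃ d, dartVert ends H d = a ∧ dartVert ends H (dartRev H d) = b := by
  obtain ⟨e, he, h | h⟩ := h
  · exact ⟨(⟨e, he⟩, true), by simp [dartVert, h]⟩
  · exact ⟨(⟨e, he⟩, false), by simp [dartVert, h]⟩

theorem dart_mem_of_closed {s : Perm (H × Bool)}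
    (hs : ∀ d d', dartVert ends H d' = dartVert ends H d → d' = d ∨ d' = s d)
    {C : Set (H × Bool)} (hrev : ∀ d ∈ C, dartRev H d ∈ C) (hsC : ∀ d ∈ C, s d ∈ C)
    {d₀ : H × Bool} (hd₀ : d₀ ∈ C)
    (hconn : ∀ d, Relation.ReflTransGen (fun a b => ∃ e ∈ H, ends e = (a, b) ∨ ends e = (b, a))
      (dartVert ends H d₀) (dartVert ends H d)) (d : H × Bool) : d ∈ C := by
  suffices h : ∀ x, Relation.ReflTransGen (fun a b => ∃ e ∈ H, ends e = (a, b) ∨ ends e = (b, a))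
      (dartVert ends H d₀) x → ∀ d, dartVert ends H d = x → d ∈ C from h _ (hconn d) d rfl
  intro x hx
  induction hx with
  | refl =>
    intro d hd
    rcases hs d₀ d hd with rfl | rfl
    exacts [hd₀, hsC _ hd₀]
  | tail _ hab ih =>
    obtain ⟨d, hda, hdb⟩ := exists_dart_of_adj hab
    have hrevC : dartRev H d ∈ C := hrev _ (ih d hda)
    intro d' hd'
    rcases hs _ d' (hd'.trans hdb.symm) with rfl | rfl
    exacts [hrevC, hsC _ hrevC]

theorem sameCycle_or_sameCycle_dartRev {s : Perm (H × Bool)} (hs_inv : Function.Involutive s)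
    (hs : ∀ d d', dartVert ends H d' = dartVert ends H d → d' = d ∨ d' = s d) {d₀ : H × Bool}
    (hconn : ∀ d, Relation.ReflTransGen (fun a b => ∃ e ∈ H, ends e = (a, b) ∨ ends e = (b, a))
      (dartVert ends H d₀) (dartVert ends H d)) (d : H × Bool) :
    (s * dartRev H).SameCycle d₀ d ∨ (s * dartRev H).SameCycle d₀ (dartRev H d) := by
  set r := dartRev H
  set σ := s * r
  refine dart_mem_of_closed hs (C := {d | σ.SameCycle d₀ d ∨ σ.SameCycle d₀ (r d)})
    ?_ ?_ (Or.inl (Perm.SameCycle.refl _ _)) hconn d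
  · intro d h
    show σ.SameCycle d₀ (r d) ∨ σ.SameCycle d₀ (r (r d))
    rw [dartRev_involutive d]
    exact h.symm
  · rintro d (h | h)
    · have : σ (r (s d)) = d := by simp [σ, r, hs_inv _]
      rw [← this] at h
      exact Or.inr (Perm.sameCycle_apply_right.mp h)
    · have : σ (r d) = s d := by simp [σ, r]
      exact Or.inl (this ▸ Perm.sameCycle_apply_right.mpr h)

theorem eq_or_eq_dartRev_of_fst_eq {d d' : H × Bool} (h : d'.1 = d.1) :
    d' = d ∨ d' = dartRev H d := by
  obtain ⟨e, _ | _⟩ := d <;> obtain ⟨e', _ | _⟩ := d' <;> simp_all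

theorem isCycleEdgeSet_of_card_dartVert_eq_two [DecidableEq V] [DecidableEq E] (hne : H.Nonempty)
    (hconn : ∀ x y : V, (∃ e ∈ H, (ends e).1 = x ∨ (ends e).2 = x) →
      (∃ e ∈ H, (ends e).1 = y ∨ (ends e).2 = y) →
      Relation.ReflTransGen (fun a b => ∃ e ∈ H, ends e = (a, b) ∨ ends e = (b, a)) x y)
    (hdeg : ∀ d, #{d' | dartVert ends H d' = dartVert ends H d} = 2) :
    IsCycleEdgeSet ends H := by
  obtain ⟨s, hs_inv, hs_ne, hs⟩ := exists_involution_of_card_fiber_eq_two _ hdeg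
  obtain ⟨e₀, he₀⟩ := hne
  set r := dartRev H
  -- `σ` crosses the current edge, then moves to the other dart at the vertex reached.
  set σ := s * r
  set d₀ : H × Bool := (⟨e₀, he₀⟩, true)
  obtain ⟨k, q, hq_inj, hq_succ, hq_range⟩ := σ.exists_fin_enum_sameCycle d₀
  have hq_cycle (i) : σ.SameCycle d₀ (q i) := (hq_range _).mp ⟨i, rfl⟩
  have hs_eq (d) : s d = σ (r d) := by simp [σ, r]
  have hq_not_rev (i) : ¬ σ.SameCycle d₀ (r (q i)) := fun h =>
    Perm.not_sameCycle_mul_apply dartRev_involutive hs_inv dartRev_apply_ne hs_ne (q i)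
      ((hq_cycle i).symm.trans h)
  have hC := sameCycle_or_sameCycle_dartRev hs_inv (fun d d' h => (hs d d').mp h)
    fun d => hconn _ _ (exists_mem_ends_eq_dartVert d₀) (exists_mem_ends_eq_dartVert d)
  refine ⟨k, fun i => dartVert ends H (q i), fun i => (q i).1, ?_, ?_, ?_, fun i => ?_⟩
  · intro i j hij
    rcases (hs (q i) (q j)).mp hij.symm with h | h
    · exact hq_inj h.symm
    · exact absurd (Perm.sameCycle_apply_right.mp (hs_eq _ ▸ h ▸ hq_cycle j)) (hq_not_rev i)
  · intro i j hij
    rcases eq_or_eq_dartRev_of_fst_eq (Subtype.ext hij.symm) with h | h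
    · exact hq_inj h.symm
    · exact absurd (h ▸ hq_cycle j) (hq_not_rev i)
  · ext e
    simp only [mem_image, mem_univ, true_and]
    refine ⟨fun he => ?_, ?_⟩
    · rcases hC (⟨e, he⟩, true) with h | h <;> obtain ⟨i, hi⟩ := (hq_range _).mpr h
      exacts [⟨i, by rw [hi]⟩, ⟨i, by rw [hi]; rfl⟩]
    · rintro ⟨i, rfl⟩
      exact (q i).1.2
  · have : dartVert ends H (q (i + 1)) = dartVert ends H (r (q i)) := by
      rw [hq_succ, Perm.mul_apply, (hs _ _).mpr (Or.inr rfl)]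
    simp only [this]
    exact ends_eq_dartVert (q i)

theorem sum_incidences_eq_card_dartVert [DecidableEq V] (x : V) :
    ∑ e ∈ H, ((if (ends e).1 = x then 1 else 0) + (if (ends e).2 = x then 1 else 0)) =
      #{d | dartVert ends H d = x} := by
  rw [card_filter, Fintype.sum_prod_type, ← sum_attach H]
  refine sum_congr rfl fun e _ => ?_
  simp only [dartVert, Fintype.sum_bool, cond_true, cond_false]
  congr

theorem card_dartVert_eq_two [DecidableEq V] (hle : #H ≤ #(univ.image (dartVert ends H)))
    (hdeg : ∀ d, 2 ≤ #{d' | dartVert ends H d' = dartVert ends H d}) (d : H × Bool) :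
    #{d' | dartVert ends H d' = dartVert ends H d} = 2 := by
  set S := univ.image (dartVert ends H)
  have hdegS : ∀ x ∈ S, 2 ≤ #{d' | dartVert ends H d' = x} := by
    simp only [S, mem_image, mem_univ, true_and, forall_exists_index, forall_apply_eq_imp_iff]
    exact hdeg
  have handshake : ∑ x ∈ S, #{d' | dartVert ends H d' = x} = 2 * #H := by
    rw [← card_eq_sum_card_image, card_univ, Fintype.card_prod, Fintype.card_coe,
      Fintype.card_bool, mul_comm]
  have hsum : ∑ _x ∈ S, 2 = ∑ x ∈ S, #{d' | dartVert ends H d' = x} := by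
    refine le_antisymm (sum_le_sum hdegS) ?_
    rw [handshake, sum_const, smul_eq_mul, mul_comm]
    omega
  exact ((sum_eq_sum_iff_of_le hdegS).mp hsum _ (mem_image_of_mem _ (mem_univ d))).symm

end Darts

theorem LinearIndependent.card_le_card_of_forall_ne_zero_mem {ι X R : Type*} [Ring R]
    [StrongRankCondition R] [Fintype ι] {v : ι → X → R} (hv : LinearIndependent R v)
    {S : Finset X} (hS : ∀ i x, v i x ≠ 0 → x ∈ S) : Fintype.card ι ≤ #S := by
  have hres : LinearIndependent R (fun i (x : S) => v i x) := by
    rw [Fintype.linearIndependent_iff] at hv ⊢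
    intro c hc
    refine hv c (funext fun x => ?_)
    by_cases hx : x ∈ S
    · simpa using congrFun hc ⟨x, hx⟩
    · have (i : ι) : v i x = 0 := by_contra fun h => hx (hS i x h)
      simp [this]
  simpa using hres.fintype_card_le_finrank

theorem theta_subgraph_dependent_general {F V E : Type*} [Field F] [DecidableEq V]
    [DecidableEq E] (ends : E → V × V) (A : V → E → F)
    (hframe : ∀ (e : E) (w : V), A w e ≠ 0 → w = (ends e).1 ∨ w = (ends e).2)
    (H : Finset E) (hne : H.Nonempty)
    (hdeg : ∀ x : V, (∃ e ∈ H, (ends e).1 = x ∨ (ends e).2 = x) →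
      2 ≤ ∑ e ∈ H, ((if (ends e).1 = x then 1 else 0) + (if (ends e).2 = x then 1 else 0)))
    (hconn : ∀ x y : V, (∃ e ∈ H, (ends e).1 = x ∨ (ends e).2 = x) →
      (∃ e ∈ H, (ends e).1 = y ∨ (ends e).2 = y) →
      Relation.ReflTransGen (fun a b => ∃ e ∈ H, ends e = (a, b) ∨ ends e = (b, a)) x y)
    (hnotcycle : ¬ IsCycleEdgeSet ends H) :
    ¬ LinearIndependent F (fun e : ↥H => fun w => A w (e : E)) := by
  intro hli
  have hle : #H ≤ #(univ.image (dartVert ends H)) := by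
    simpa using hli.card_le_card_of_forall_ne_zero_mem fun e w hw => by
      rcases hframe e w hw with rfl | rfl
      exacts [mem_image_of_mem _ (mem_univ (e, true)), mem_image_of_mem _ (mem_univ (e, false))]
  have hdeg' (d : H × Bool) : 2 ≤ #{d' | dartVert ends H d' = dartVert ends H d} := by
    rw [← sum_incidences_eq_card_dartVert]
    exact hdeg _ (exists_mem_ends_eq_dartVert d)
  exact hnotcycle
    (isCycleEdgeSet_of_card_dartVert_eq_two hne hconn (card_dartVert_eq_two hle hdeg'))

/-- Let `A` be a frame matrix over a field `F` whose columns are indexed by the arcs of a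
digraph `G = (V, ends)`, each column supported on the endpoints of the corresponding arc.
If `H` is a (nonempty) connected subgraph of `G` of minimum degree at least `2` (loops
counting twice) that is not a cycle, then the columns of `A` indexed by the edges of `H`
are linearly dependent. -/
theorem theta_subgraph_dependent {F V E : Type*} [Field F] [Fintype V] [DecidableEq V]
    [DecidableEq E] (ends : E → V × V) (A : V → E → F)
    (hframe : ∀ (e : E) (w : V), A w e ≠ 0 → w = (ends e).1 ∨ w = (ends e).2)
    (H : Finset E) (hne : H.Nonempty)
    (hdeg : ∀ x : V, (∃ e ∈ H, (ends e).1 = x ∨ (ends e).2 = x) →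
      2 ≤ ∑ e ∈ H, ((if (ends e).1 = x then 1 else 0) + (if (ends e).2 = x then 1 else 0)))
    (hconn : ∀ x y : V, (∃ e ∈ H, (ends e).1 = x ∨ (ends e).2 = x) →
      (∃ e ∈ H, (ends e).1 = y ∨ (ends e).2 = y) →
      Relation.ReflTransGen (fun a b => ∃ e ∈ H, ends e = (a, b) ∨ ends e = (b, a)) x y)
    (hnotcycle : ¬ IsCycleEdgeSet ends H) :
    ¬ LinearIndependent F (fun e : ↥H => fun w => A w (e : E)) :=
  theta_subgraph_dependent_general ends A hframe H hne hdeg hconn hnotcycle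
end
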